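/- Let M be a countable structure satisfying Hypothesis (H) and let H₁, H₂ ∈ GS(M). Then the following are equivalent: (1) H₁ is a normal subgroup of H₂ of finite index; (2) there is K ∈ A(M) and subgroups L₁ ⊴ L₂ ≤ Aut(K) such that Hᵢ = G_(K,Lᵢ) for i = 1,2. -/

import Mathlib

open FirstOrder

namespace Paper

variable (L : FirstOrder.Language) (M : Type*) [L.Structure M]

/-- The group of automorphisms of a first-order structure, with composition. -/
instance autGroup : Group (M ≃[L] M) where
  one := FirstOrder.Language.Equiv.refl L M
  mul f g := f.comp g
  inv := FirstOrder.Language.Equiv.symm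
  mul_assoc _ _ _ := rfl
  one_mul f := FirstOrder.Language.Equiv.ext fun a => by
    show (FirstOrder.Language.Equiv.refl L M).comp f a = f a; simp
  mul_one f := FirstOrder.Language.Equiv.ext fun a => by
    show f.comp (FirstOrder.Language.Equiv.refl L M) a = f a; simp
  inv_mul_cancel f := FirstOrder.Language.Equiv.ext fun a => by
    show f.symm.comp f a = FirstOrder.Language.Equiv.refl L M a; simp

@[simp] theorem aut_one_apply (a : M) : (1 : M ≃[L] M) a = a := by
  show FirstOrder.Language.Equiv.refl L M a = a; simp
@[simp] theorem aut_mul_apply (f g : M ≃[L] M) (a : M) : (f * g) a = f (g a) := rfl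
@[simp] theorem aut_inv_apply (f : M ≃[L] M) (a : M) : f⁻¹ a = f.symm a := rfl
@[simp] theorem aut_coe_mul (f g : M ≃[L] M) : ⇑(f * g) = ⇑f ∘ ⇑g := rfl

/-- The natural action of the automorphism group on the structure. -/
instance autAction : MulAction (M ≃[L] M) M where
  smul f a := f a
  one_smul _ := rfl
  mul_smul _ _ _ := rfl

@[simp] theorem aut_smul_def (f : M ≃[L] M) (a : M) : f • a = f a := rfl

/-- The topology of pointwise convergence on the automorphism group (the domain
being regarded as discrete). -/
instance autTopology : TopologicalSpace (M ≃[L] M) :=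
  letI : TopologicalSpace M := ⊥
  TopologicalSpace.induced (fun g => (g : M → M)) Pi.topologicalSpace

/-- The pointwise stabilizer `G_(A)` of a set `A ⊆ M` in `Aut(M)`. -/
def pstab (A : Set M) : Subgroup (M ≃[L] M) where
  carrier := {g | ∀ a ∈ A, g a = a}
  one_mem' := fun _ _ => rfl
  mul_mem' := by
    intro f g hf hg a ha
    simp only [Set.mem_setOf_eq] at *
    rw [aut_mul_apply, hg a ha, hf a ha]
  inv_mem' := by
    intro f hf a ha
    simp only [Set.mem_setOf_eq] at *
    rw [aut_inv_apply]
    conv_lhs => rw [← hf a ha]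
    exact f.symm_apply_apply a

/-- The setwise stabilizer `G_{A}` of a set `A ⊆ M` in `Aut(M)`. -/
def sstab (A : Set M) : Subgroup (M ≃[L] M) where
  carrier := {g | g '' A = A}
  one_mem' := by
    simp only [Set.mem_setOf_eq]
    ext a; simp [Set.mem_image]
  mul_mem' := by
    intro f g hf hg
    simp only [Set.mem_setOf_eq] at *
    rw [aut_coe_mul, Set.image_comp, hg, hf]
  inv_mem' := by
    intro f hf
    simp only [Set.mem_setOf_eq] at *
    conv_lhs => rw [← hf]
    rw [Set.image_image]
    ext a; constructor
    · rintro ⟨x, hx, rfl⟩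
      simpa [f.symm_apply_apply] using hx
    · intro ha
      exact ⟨a, ha, f.symm_apply_apply a⟩

/-- The Galois-algebraic closure of `A ⊆ M`: the set of elements with finite orbit
under the pointwise stabilizer of `A`. -/
def aclg (A : Set M) : Set M :=
  {b | (MulAction.orbit (pstab L M A) b).Finite}

/-- The Galois-definable closure of the empty set: elements fixed by every automorphism. -/
def dclg0 : Set M := {b | ∀ g : M ≃[L] M, g b = b}

/-- `p : K ≃ K'` is an isomorphism between the induced substructures on `K` and `K'`. -/
def IsPartialIso (K K' : Set M) (p : K ≃ K') : Prop :=
  (∀ {n : ℕ} (f : L.Functions n) (x : Fin n → K),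
      ∃ h : FirstOrder.Language.Structure.funMap f (fun i => (x i : M)) ∈ K,
        (p ⟨FirstOrder.Language.Structure.funMap f (fun i => (x i : M)), h⟩ : M) =
          FirstOrder.Language.Structure.funMap f (fun i => (p (x i) : M))) ∧
  (∀ {n : ℕ} (r : L.Relations n) (x : Fin n → K),
      FirstOrder.Language.Structure.RelMap r (fun i => (x i : M)) ↔
        FirstOrder.Language.Structure.RelMap r (fun i => (p (x i) : M)))

/-- `A(M)`: the collection of Galois-algebraic closures of finite subsets of `M`. -/
def AA : Set (Set M) := {K | ∃ A : Set M, A.Finite ∧ K = aclg L M A}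

/-- Hypothesis (H). -/
structure HypH : Prop where
  countable : Countable M
  locallyFinite : ∀ A : Set M, A.Finite → (aclg L M A).Finite
  extendsIso : ∀ (K K' : Set M), K.Finite → K'.Finite →
    aclg L M K = K → aclg L M K' = K' → ∀ p : K ≃ K', IsPartialIso L M K K' p →
      ∃ g : M ≃[L] M, ∀ a : K, g a = (p a : M)
  openSandwich : ∀ H : Subgroup (M ≃[L] M), IsOpen (H : Set (M ≃[L] M)) →
    ∃! K : Set M, K.Finite ∧ aclg L M K = K ∧ pstab L M K ≤ H ∧ H ≤ sstab L M K


/-- Generalized pointwise stabilizer `G_(K,L)`. -/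
def genStab (K : Set M) (Lsub : Subgroup (Equiv.Perm K)) : Subgroup (M ≃[L] M) where
  carrier := {f | ∃ p ∈ Lsub, ∀ a : K, f a = (p a : M)}
  one_mem' := ⟨1, Lsub.one_mem, fun a => by simp⟩
  mul_mem' := by
    rintro f g ⟨p, hp, hfp⟩ ⟨q, hq, hgq⟩
    refine ⟨p * q, Lsub.mul_mem hp hq, fun a => ?_⟩
    rw [aut_mul_apply, hgq a, hfp (q a)]
    rfl
  inv_mem' := by
    rintro f ⟨p, hp, hfp⟩
    refine ⟨p⁻¹, Lsub.inv_mem hp, fun a => ?_⟩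
    have h1 : f ((p⁻¹ a : K) : M) = ((p (p⁻¹ a) : K) : M) := hfp _
    rw [show p (p⁻¹ a) = a from p.apply_symm_apply a] at h1
    rw [aut_inv_apply, ← h1, FirstOrder.Language.Equiv.symm_apply_apply]

/-- `GS(M)`: the collection of generalized pointwise stabilizers. -/
def GS : Set (Subgroup (M ≃[L] M)) :=
  {H | ∃ K ∈ AA L M, ∃ Lsub : Subgroup (Equiv.Perm K),
    (∀ p ∈ Lsub, IsPartialIso L M K K (p : K ≃ K)) ∧ H = genStab L M K Lsub}

/-- `PS(M)`: the collection of pointwise stabilizers of members of `A(M)`. -/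
def PS : Set (Subgroup (M ≃[L] M)) := {H | ∃ K ∈ AA L M, H = pstab L M K}

/-- The lattice `A₊(M)`. -/
def Aplus : Set (Set M) := AA L M ∪ {dclg0 L M}

/-- Covering relation in `S`. -/
def hasseCovers {α : Type*} (S : Set (Set α)) (A B : Set α) : Prop :=
  A ∈ S ∧ B ∈ S ∧ A ⊂ B ∧ ¬∃ C ∈ S, A ⊂ C ∧ C ⊂ B

/-- Adjacency in the Hasse diagram of `S`. -/
def hasseAdj {α : Type*} (S : Set (Set α)) (A B : Set α) : Prop :=
  hasseCovers S A B ∨ hasseCovers S B A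

/-- `A_k(M)`: members of `A(M)` distinct from `dcl(∅)` at distance `≤ k` from the bottom
of the lattice `A₊(M)` in its Hasse diagram. -/
def Ak (k : ℕ) : Set (Set M) :=
  {K | K ∈ AA L M ∧ K ≠ dclg0 L M ∧ ∃ (j : ℕ) (c : Fin (j + 1) → Set M), j ≤ k ∧
    c 0 = dclg0 L M ∧ c (Fin.last j) = K ∧
    ∀ i : Fin j, hasseAdj (Aplus L M) (c i.castSucc) (c i.succ)}

/-- `A_k(M)` for `k ≤ ω`, with `A_ω(M) = A(M)`. -/
def AkE (k : ℕ∞) : Set (Set M) :=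
  match k with
  | ⊤ => AA L M
  | (k : ℕ) => Ak L M k

/-- `k_M`: the supremum of lengths of strict chains of Galois-algebraic closures of
singletons. -/
noncomputable def kM : ℕ∞ :=
  ⨆ k ∈ {k : ℕ | ∃ a : Fin k → M, ∀ i j : Fin k, i < j → aclg L M {a i} ⊂ aclg L M {a j}},
    (k : ℕ∞)

/-- The domain of the expanded structure `E^ex_M(k)`: triples `(K, p, K')` with
`K, K' ∈ A_k(M)` and `p : K ≅ K'`. -/
structure ExTriple (k : ℕ∞) where
  K : Set M
  K' : Set M
  hK : K ∈ AkE L M k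
  hK' : K' ∈ AkE L M k
  p : K ≃ K'
  iso : IsPartialIso L M K K' p

/-- The unary predicate of `E^ex_M(k)` holding of the identity triples. -/
def IsIdTriple {k : ℕ∞} (t : ExTriple L M k) : Prop :=
  t.K = t.K' ∧ ∀ a : t.K, (t.p a : M) = (a : M)

/-- The `n`-ary relation `E_n` of `E^ex_M(k)`. -/
def ERel {k : ℕ∞} {n : ℕ} (x : Fin n → ExTriple L M k) : Prop :=
  ∃ g : M ≃[L] M, ∀ (i : Fin n) (a : (x i).K), g a = ((x i).p a : M)

/-- The binary relation `Dom` of `E^ex_M(k)`. -/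
def DomRel {k : ℕ∞} (t s : ExTriple L M k) : Prop := IsIdTriple L M s ∧ s.K = t.K

/-- The binary relation `Cod` of `E^ex_M(k)`. -/
def CodRel {k : ℕ∞} (t s : ExTriple L M k) : Prop := IsIdTriple L M s ∧ s.K = t.K'

variable {L M}

/-- A bijection between the domains of `E^ex_M(k)` and `E^ex_N(k)` is an isomorphism
if it preserves the identity-triple predicate, all the relations `E_n`, `Dom` and `Cod`. -/
def IsExIso {L' : FirstOrder.Language} {N : Type*} [L'.Structure N] {k : ℕ∞}
    (F : ExTriple L M k ≃ ExTriple L' N k) : Prop :=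
  (∀ t, IsIdTriple L M t ↔ IsIdTriple L' N (F t)) ∧
  (∀ (n : ℕ) (x : Fin n → ExTriple L M k), ERel L M x ↔ ERel L' N (F ∘ x)) ∧
  (∀ t s, DomRel L M t s ↔ DomRel L' N (F t) (F s)) ∧
  (∀ t s, CodRel L M t s ↔ CodRel L' N (F t) (F s))

variable (L M)

/-- The automorphism group of the expanded structure `E^ex_M(k)`. -/
def exAut (k : ℕ∞) : Subgroup (Equiv.Perm (ExTriple L M k)) where
  carrier := {σ | IsExIso (σ : ExTriple L M k ≃ ExTriple L M k)}
  one_mem' := by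
    refine ⟨fun t => ?_, fun n x => ?_, fun t s => ?_, fun t s => ?_⟩ <;>
      simp [Equiv.Perm.coe_one, Function.comp_def]
  mul_mem' := by
    rintro σ τ ⟨hσ1, hσ2, hσ3, hσ4⟩ ⟨hτ1, hτ2, hτ3, hτ4⟩
    refine ⟨fun t => ?_, fun n x => ?_, fun t s => ?_, fun t s => ?_⟩
    · exact (hτ1 t).trans (hσ1 (τ t))
    · exact (hτ2 n x).trans (hσ2 n (τ ∘ x))
    · exact (hτ3 t s).trans (hσ3 (τ t) (τ s))
    · exact (hτ4 t s).trans (hσ4 (τ t) (τ s))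
  inv_mem' := by
    rintro σ ⟨hσ1, hσ2, hσ3, hσ4⟩
    refine ⟨fun t => ?_, fun n x => ?_, fun t s => ?_, fun t s => ?_⟩
    · have := hσ1 (σ⁻¹ t); simpa using this.symm
    · have := hσ2 n (⇑(σ⁻¹) ∘ x)
      have hx : ⇑σ ∘ ⇑(σ⁻¹) ∘ x = x := by
        funext i; simp
      rw [hx] at this
      exact this.symm
    · have := hσ3 (σ⁻¹ t) (σ⁻¹ s); simpa using this.symm
    · have := hσ4 (σ⁻¹ t) (σ⁻¹ s); simpa using this.symm

/-- The subgroup of topological automorphisms of a topological group. -/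
def topMulAut (G : Type*) [Group G] [TopologicalSpace G] : Subgroup (MulAut G) where
  carrier := {α | Continuous (α : G → G) ∧ Continuous (α.symm : G → G)}
  one_mem' := ⟨continuous_id, continuous_id⟩
  mul_mem' := by
    rintro α β ⟨hα1, hα2⟩ ⟨hβ1, hβ2⟩
    exact ⟨hα1.comp hβ1, hβ2.comp hα2⟩
  inv_mem' := by
    rintro α ⟨h1, h2⟩
    exact ⟨h2, h1⟩

/-- A group isomorphism between topological groups which is a homeomorphism. -/
def IsTopIso {G H : Type*} [Group G] [Group H] [TopologicalSpace G] [TopologicalSpace H]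
    (e : G ≃* H) : Prop :=
  Continuous (e : G → H) ∧ Continuous (e.symm : H → G)

/-- The natural homomorphism from `Aut(M)` to the symmetric group on `M`. -/
def toPerm : (M ≃[L] M) →* Equiv.Perm M where
  toFun g := g.toEquiv
  map_one' := rfl
  map_mul' f g := Equiv.ext fun _ => rfl

/-- The orbit equivalence relation on `n`-tuples. -/
def orbRel (n : ℕ) (x y : Fin n → M) : Prop := ∃ g : M ≃[L] M, ∀ i, g (x i) = y i

/-- The automorphism group of the orbital structure `E_M`: permutations of `M`
preserving each orbit equivalence relation. -/
def autOrbital : Subgroup (Equiv.Perm M) where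
  carrier := {f | ∀ (n : ℕ) (x y : Fin n → M),
    orbRel L M n x y ↔ orbRel L M n (f ∘ x) (f ∘ y)}
  one_mem' := by intro n x y; simp [Equiv.Perm.coe_one]
  mul_mem' := by
    intro f g hf hg n x y
    exact (hg n x y).trans (hf n (g ∘ x) (g ∘ y))
  inv_mem' := by
    intro f hf n x y
    have := hf n (⇑(f⁻¹) ∘ x) (⇑(f⁻¹) ∘ y)
    have hx : ⇑f ∘ ⇑(f⁻¹) ∘ x = x := by funext i; simp
    have hy : ⇑f ∘ ⇑(f⁻¹) ∘ y = y := by funext i; simp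
    rw [hx, hy] at this
    exact this.symm

/-- `Aut°(E_M)`: automorphisms of the orbital structure preserving each orbit
equivalence class. -/
def autOrbitalFix : Subgroup (Equiv.Perm M) where
  carrier := {f | f ∈ autOrbital L M ∧ ∀ (n : ℕ) (x : Fin n → M), orbRel L M n x (f ∘ x)}
  one_mem' := ⟨(autOrbital L M).one_mem, fun n x => ⟨1, fun i => by simp [Equiv.Perm.coe_one]⟩⟩
  mul_mem' := by
    rintro f g ⟨hf, hf2⟩ ⟨hg, hg2⟩
    refine ⟨(autOrbital L M).mul_mem hf hg, fun n x => ?_⟩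
    obtain ⟨a, ha⟩ := hg2 n x
    obtain ⟨b, hb⟩ := hf2 n (g ∘ x)
    exact ⟨b * a, fun i => by rw [aut_mul_apply, ha i, hb i]; rfl⟩
  inv_mem' := by
    rintro f ⟨hf, hf2⟩
    refine ⟨(autOrbital L M).inv_mem hf, fun n x => ?_⟩
    obtain ⟨a, ha⟩ := hf2 n (⇑(f⁻¹) ∘ x)
    refine ⟨a⁻¹, fun i => ?_⟩
    have hi := ha i
    simp only [Function.comp_apply] at hi
    rw [show f (f⁻¹ (x i)) = x i from f.apply_symm_apply (x i)] at hi
    rw [← hi, aut_inv_apply, FirstOrder.Language.Equiv.symm_apply_apply]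
    rfl

/-- A homogeneous structure: isomorphisms between finite substructures extend to
automorphisms. -/
def Homogeneous : Prop :=
  ∀ (K K' : Set M), K.Finite → K'.Finite → ∀ p : K ≃ K',
    IsPartialIso L M K K' p → ∃ g : M ≃[L] M, ∀ a : K, g a = (p a : M)

/-- Weak elimination of imaginaries, phrased group-theoretically: every open subgroup is
sandwiched between the pointwise and setwise stabilizers of a unique smallest finite
Galois-algebraically closed set. -/
def HasWEI : Prop :=
  ∀ H : Subgroup (M ≃[L] M), IsOpen (H : Set (M ≃[L] M)) →
    ∃ K : Set M, (K.Finite ∧ aclg L M K = K ∧ pstab L M K ≤ H ∧ H ≤ sstab L M K) ∧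
      ∀ K' : Set M, (K'.Finite ∧ aclg L M K' = K' ∧ pstab L M K' ≤ H ∧ H ≤ sstab L M K') →
        K ⊆ K'

/-- No algebraicity: every finite set is Galois-algebraically closed. -/
def NoAlgebraicity : Prop := ∀ A : Set M, A.Finite → aclg L M A = A

/-- The small index property: every subgroup of index `< 2^ℵ₀` is open. -/
def SIP : Prop :=
  ∀ H : Subgroup (M ≃[L] M), Cardinal.mk ((M ≃[L] M) ⧸ H) < Cardinal.continuum →
    IsOpen (H : Set (M ≃[L] M))

/-- An oligomorphic action: finitely many orbits on `n`-tuples for every `n`. -/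
def Oligo (G : Type*) [Group G] (X : Type*) [MulAction G X] : Prop :=
  ∀ n : ℕ, Finite (MulAction.orbitRel.Quotient G (Fin n → X))

end Paper

namespace Paper

/-- ω-categoricity: `M` is, up to isomorphism, the unique countable model of its complete
first-order theory. -/
def IsOmegaCategorical (L : FirstOrder.Language) (M : Type w) [L.Structure M] : Prop :=
  Countable M ∧ ∀ (N : Type w) (iN : L.Structure N), Countable N → Nonempty N →
    (@FirstOrder.Language.Theory.Model L N iN (L.completeTheory M)) →
      Nonempty (@FirstOrder.Language.Equiv L N M iN _)

end Paper

/- Under (H) every open subgroup `H` of `G = Aut(M)` has a unique finite Galois-algebraically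
closed `K` with `G_(K) ≤ H ≤ G_{K}`, and conjugating `H` by `g` replaces `K` by `g K`. If `H₁` is
normal in `H₂`, then `H₂` lies in the normalizer of `H₁`, so it stabilizes this `K₁` setwise and
`K₁` is also the set attached to `H₂`: both subgroups live over one `K`. Over a fixed `K`,
`G_(K,L)` is the preimage of `L` under the restriction map `G_{K} → Sym(K)`, whose image contains
every partial automorphism of `K` by homogeneity; so inclusion and normality pass between the
`G_(K,Lᵢ)` and the `Lᵢ`, and the index is finite because `Sym(K)` is finite. -/

theorem MulAction.finite_orbit_iff_index_stabilizer_ne_zero {G X : Type*} [Group G]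
    [MulAction G X] (x : X) :
    (MulAction.orbit G x).Finite ↔ (MulAction.stabilizer G x).index ≠ 0 := by
  rw [MulAction.index_stabilizer]
  exact ⟨fun h => ((Set.ncard_pos h).2 ⟨x, MulAction.mem_orbit_self x⟩).ne',
    Set.finite_of_ncard_ne_zero⟩

theorem Subgroup.finite_orbit_iff_relIndex_stabilizer_ne_zero {G X : Type*} [Group G]
    [MulAction G X] (H : Subgroup G) (x : X) :
    (MulAction.orbit H x).Finite ↔ (MulAction.stabilizer G x).relIndex H ≠ 0 :=
  MulAction.finite_orbit_iff_index_stabilizer_ne_zero x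

theorem Subgroup.finite_orbit_of_relIndex_ne_zero {G X : Type*} [Group G] [MulAction G X]
    {H K : Subgroup G} (hHK : H.relIndex K ≠ 0) {x : X} (hx : (MulAction.orbit H x).Finite) :
    (MulAction.orbit K x).Finite := by
  rw [Subgroup.finite_orbit_iff_relIndex_stabilizer_ne_zero] at hx ⊢
  exact Subgroup.relIndex_ne_zero_trans hx hHK

theorem Subgroup.normal_subgroupOf_comap_iff {G N : Type*} [Group G] [Group N] {f : N →* G}
    {H K : Subgroup G} (hHK : H ≤ K) (hK : K ≤ f.range) :
    ((H.comap f).subgroupOf (K.comap f)).Normal ↔ (H.subgroupOf K).Normal := by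
  rw [Subgroup.normal_subgroupOf_iff_le_normalizer hHK,
    Subgroup.normal_subgroupOf_iff_le_normalizer (Subgroup.comap_mono hHK),
    ← Subgroup.comap_normalizer_eq_of_le_range (hHK.trans hK),
    Subgroup.comap_le_comap_of_le_range hK]

theorem Subgroup.normal_subgroupOf_map_iff {G N : Type*} [Group G] [Group N] {f : G →* N}
    (hf : Function.Injective f) {H K : Subgroup G} (hHK : H ≤ K) :
    ((H.map f).subgroupOf (K.map f)).Normal ↔ (H.subgroupOf K).Normal := by
  rw [Subgroup.normal_subgroupOf_iff_le_normalizer hHK,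
    Subgroup.normal_subgroupOf_iff_le_normalizer (Subgroup.map_mono hHK),
    Subgroup.map_le_iff_le_comap,
    Subgroup.comap_normalizer_eq_of_le_range (Subgroup.map_le_range f H),
    Subgroup.comap_map_eq_self_of_injective hf]

namespace Paper

section

variable {L : FirstOrder.Language} {M : Type*} [L.Structure M]

theorem continuous_aut_apply (x : M) :
    @Continuous (M ≃[L] M) M _ ⊥ fun g => g x :=
  let _ : TopologicalSpace M := ⊥
  (continuous_apply x).comp continuous_induced_dom

instance : SeparatelyContinuousMul (M ≃[L] M) := by
  let _ : TopologicalSpace M := ⊥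
  have : DiscreteTopology M := ⟨rfl⟩
  exact ⟨continuous_induced_rng.2 (continuous_pi fun x =>
      continuous_of_discreteTopology.comp (continuous_aut_apply x)),
    continuous_induced_rng.2 (continuous_pi fun x => continuous_aut_apply _)⟩

theorem isOpen_pstab {K : Set M} (hK : K.Finite) : IsOpen (pstab L M K : Set (M ≃[L] M)) := by
  let _ : TopologicalSpace M := ⊥
  have : DiscreteTopology M := ⟨rfl⟩
  have hpstab : (pstab L M K : Set (M ≃[L] M)) = ⋂ a ∈ K, (fun g : M ≃[L] M => g a) ⁻¹' {a} := by
    ext g; simp only [Set.mem_iInter, Set.mem_preimage, Set.mem_singleton_iff]; rfl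
  rw [hpstab]
  exact hK.isOpen_biInter fun a _ => (continuous_aut_apply a).isOpen_preimage _ (isOpen_discrete _)

theorem pstab_le_sstab (A : Set M) : pstab L M A ≤ sstab L M A :=
  fun _ hg => (Set.image_congr hg).trans (Set.image_id' A)

theorem pstab_image (g : M ≃[L] M) (A : Set M) :
    pstab L M ((g : M → M) '' A) = (pstab L M A).map (MulAut.conj g).toMonoidHom := by
  ext x
  rw [Subgroup.mem_map_equiv, MulAut.conj_symm_apply]
  show (∀ b ∈ (g : M → M) '' A, x b = b) ↔ ∀ a ∈ A, (g⁻¹ * x * g) a = a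
  simp only [Set.forall_mem_image, aut_mul_apply, aut_inv_apply]
  exact forall₂_congr fun a _ => (g.toEquiv.symm_apply_eq).symm

open scoped Pointwise in
theorem sstab_eq_stabilizer (A : Set M) : sstab L M A = MulAction.stabilizer (M ≃[L] M) A := by
  ext g
  rw [MulAction.mem_stabilizer_iff, ← Set.image_smul]
  rfl

open scoped Pointwise in
theorem sstab_image (g : M ≃[L] M) (A : Set M) :
    sstab L M ((g : M → M) '' A) = (sstab L M A).map (MulAut.conj g).toMonoidHom := by
  rw [sstab_eq_stabilizer, sstab_eq_stabilizer, ← MulAction.stabilizer_smul_eq_stabilizer_map_conj,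
    ← Set.image_smul]
  rfl

theorem orbit_pstab_image (g : M ≃[L] M) (A : Set M) (b : M) :
    MulAction.orbit (pstab L M ((g : M → M) '' A)) (g b) =
      (g : M → M) '' MulAction.orbit (pstab L M A) b := by
  ext y
  simp only [MulAction.mem_orbit_iff, Subtype.exists, Subgroup.mk_smul, aut_smul_def, pstab_image,
    Subgroup.mem_map, Set.mem_image, exists_prop, MulEquiv.coe_toMonoidHom, MulAut.conj_apply]
  constructor
  · rintro ⟨_, ⟨h, hh, rfl⟩, rfl⟩
    exact ⟨h b, ⟨h, hh, rfl⟩, by simp⟩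
  · rintro ⟨_, ⟨h, hh, rfl⟩, rfl⟩
    exact ⟨_, ⟨h, hh, rfl⟩, by simp⟩

theorem aclg_image (g : M ≃[L] M) (A : Set M) :
    aclg L M ((g : M → M) '' A) = (g : M → M) '' aclg L M A := by
  ext y
  obtain ⟨b, rfl⟩ := g.surjective y
  show (MulAction.orbit _ (g b)).Finite ↔ g b ∈ (g : M → M) '' aclg L M A
  rw [g.injective.mem_set_image, orbit_pstab_image, Set.finite_image_iff g.injective.injOn]
  rfl

theorem subset_aclg (A : Set M) : A ⊆ aclg L M A := fun a ha =>
  (Set.finite_singleton a).subset (by rintro _ ⟨g, rfl⟩; exact g.2 a ha)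

theorem pstab_le_sstab_aclg (A : Set M) : pstab L M A ≤ sstab L M (aclg L M A) := by
  intro g hg
  show (g : M → M) '' aclg L M A = aclg L M A
  rw [← aclg_image, show (g : M → M) '' A = A from pstab_le_sstab A hg]

variable (L M) in
def restrict (K : Set M) : sstab L M K →* Equiv.Perm K where
  toFun g := ((g : M ≃[L] M).toEquiv.image K).trans (Equiv.setCongr g.2)
  map_one' := Equiv.ext fun _ => rfl
  map_mul' _ _ := Equiv.ext fun _ => rfl

theorem pstab_subgroupOf_sstab (K : Set M) :
    (pstab L M K).subgroupOf (sstab L M K) = (restrict L M K).ker := by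
  ext g
  rw [Subgroup.mem_subgroupOf, MonoidHom.mem_ker, Equiv.ext_iff]
  exact ⟨fun hg a => Subtype.ext (hg a a.2), fun hg a ha => congrArg Subtype.val (hg ⟨a, ha⟩)⟩

theorem relIndex_pstab_sstab_ne_zero {K : Set M} (hK : K.Finite) :
    (pstab L M K).relIndex (sstab L M K) ≠ 0 := by
  have := hK.to_subtype
  rw [Subgroup.relIndex, pstab_subgroupOf_sstab]
  exact Subgroup.FiniteIndex.index_ne_zero

theorem aclg_aclg {A : Set M} (hA : (aclg L M A).Finite) :
    aclg L M (aclg L M A) = aclg L M A := by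
  refine Set.Subset.antisymm (fun b hb => ?_) (subset_aclg _)
  have hindex : (pstab L M (aclg L M A)).relIndex (pstab L M A) ≠ 0 :=
    Subgroup.relIndex_eq_zero_of_le_right (pstab_le_sstab_aclg A) |>.mt
      (relIndex_pstab_sstab_ne_zero hA)
  exact Subgroup.finite_orbit_of_relIndex_ne_zero hindex hb

theorem mem_sstab_of_agree {K : Set M} {g : M ≃[L] M} {p : Equiv.Perm K}
    (hgp : ∀ a : K, g a = (p a : M)) : g ∈ sstab L M K := by
  show (g : M → M) '' K = K
  ext x
  refine ⟨?_, fun hx => ⟨p.symm ⟨x, hx⟩, (p.symm ⟨x, hx⟩).2, by rw [hgp, p.apply_symm_apply]⟩⟩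
  rintro ⟨a, ha, rfl⟩
  exact hgp ⟨a, ha⟩ ▸ (p ⟨a, ha⟩).2

theorem restrict_eq_of_agree {K : Set M} {g : sstab L M K} {p : Equiv.Perm K}
    (hgp : ∀ a : K, (g : M ≃[L] M) a = (p a : M)) : restrict L M K g = p :=
  Equiv.ext fun a => Subtype.ext (hgp a)

theorem mem_range_restrict_of_agree {K : Set M} {g : M ≃[L] M} {p : Equiv.Perm K}
    (hgp : ∀ a : K, g a = (p a : M)) : p ∈ (restrict L M K).range :=
  ⟨⟨g, mem_sstab_of_agree hgp⟩, restrict_eq_of_agree hgp⟩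

theorem genStab_eq_map_comap (K : Set M) (Lsub : Subgroup (Equiv.Perm K)) :
    genStab L M K Lsub = (Lsub.comap (restrict L M K)).map (sstab L M K).subtype := by
  ext g
  simp only [Subgroup.mem_map, Subgroup.mem_comap, Subgroup.coe_subtype, Subtype.exists,
    exists_and_right, exists_eq_right]
  constructor
  · rintro ⟨p, hp, hgp⟩
    exact ⟨mem_sstab_of_agree hgp, by rwa [restrict_eq_of_agree hgp]⟩
  · rintro ⟨hg, hp⟩
    exact ⟨_, hp, fun a => rfl⟩

theorem pstab_le_genStab (K : Set M) (Lsub : Subgroup (Equiv.Perm K)) :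
    pstab L M K ≤ genStab L M K Lsub :=
  fun _ hg => ⟨1, Lsub.one_mem, fun a => hg a a.2⟩

theorem genStab_le_sstab (K : Set M) (Lsub : Subgroup (Equiv.Perm K)) :
    genStab L M K Lsub ≤ sstab L M K :=
  fun _ ⟨_, _, hgp⟩ => mem_sstab_of_agree hgp

theorem genStab_le_genStab_iff {K : Set M} {L₁ L₂ : Subgroup (Equiv.Perm K)}
    (hL₁ : L₁ ≤ (restrict L M K).range) :
    genStab L M K L₁ ≤ genStab L M K L₂ ↔ L₁ ≤ L₂ := by
  rw [genStab_eq_map_comap, genStab_eq_map_comap,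
    Subgroup.map_le_map_iff_of_injective (Subgroup.subtype_injective _),
    Subgroup.comap_le_comap_of_le_range hL₁]

theorem normal_genStab_iff {K : Set M} {L₁ L₂ : Subgroup (Equiv.Perm K)} (hL : L₁ ≤ L₂)
    (hL₂ : L₂ ≤ (restrict L M K).range) :
    ((genStab L M K L₁).subgroupOf (genStab L M K L₂)).Normal ↔ (L₁.subgroupOf L₂).Normal := by
  rw [genStab_eq_map_comap, genStab_eq_map_comap,
    Subgroup.normal_subgroupOf_map_iff (Subgroup.subtype_injective _) (Subgroup.comap_mono hL),
    Subgroup.normal_subgroupOf_comap_iff hL hL₂]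

theorem relIndex_ne_zero_of_pstab_le {K : Set M} (hK : K.Finite) {H₁ H₂ : Subgroup (M ≃[L] M)}
    (hH₁ : pstab L M K ≤ H₁) (hH₂ : H₂ ≤ sstab L M K) : H₁.relIndex H₂ ≠ 0 :=
  mt (Subgroup.relIndex_eq_zero_of_le_left hH₁)
    (mt (Subgroup.relIndex_eq_zero_of_le_right hH₂) (relIndex_pstab_sstab_ne_zero hK))

/-- The sets `K` that Hypothesis (H)(3) attaches to the subgroup `H`. -/
structure IsSupport (H : Subgroup (M ≃[L] M)) (K : Set M) : Prop where
  finite : K.Finite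
  aclg_eq : aclg L M K = K
  pstab_le : pstab L M K ≤ H
  le_sstab : H ≤ sstab L M K

namespace IsSupport

variable {H : Subgroup (M ≃[L] M)} {K : Set M}

theorem isOpen (hK : IsSupport H K) : IsOpen (H : Set (M ≃[L] M)) :=
  Subgroup.isOpen_mono hK.pstab_le (isOpen_pstab hK.finite)

theorem unique (h : HypH L M) {K' : Set M} (hK : IsSupport H K) (hK' : IsSupport H K') :
    K = K' :=
  (h.openSandwich H hK.isOpen).unique ⟨hK.1, hK.2, hK.3, hK.4⟩ ⟨hK'.1, hK'.2, hK'.3, hK'.4⟩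

theorem map_conj (hK : IsSupport H K) (g : M ≃[L] M) :
    IsSupport (H.map (MulAut.conj g).toMonoidHom) ((g : M → M) '' K) where
  finite := hK.finite.image _
  aclg_eq := by rw [aclg_image, hK.aclg_eq]
  pstab_le := by rw [pstab_image]; exact Subgroup.map_mono hK.pstab_le
  le_sstab := by rw [sstab_image]; exact Subgroup.map_mono hK.le_sstab

theorem normalizer_le_sstab (h : HypH L M) (hK : IsSupport H K) :
    Subgroup.normalizer (H : Set (M ≃[L] M)) ≤ sstab L M K := by
  intro g hg
  have hgK := hK.map_conj g
  rw [MulEquiv.toMonoidHom_eq_coe, Subgroup.mem_normalizer_iff_map_conj_eq.1 hg] at hgK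
  exact hgK.unique h hK

theorem eq_of_normal (h : HypH L M) {H₂ : Subgroup (M ≃[L] M)} {K₂ : Set M}
    (hK : IsSupport H K) (hK₂ : IsSupport H₂ K₂) (hle : H ≤ H₂)
    (hnormal : (H.subgroupOf H₂).Normal) : K = K₂ :=
  have hH₂ : H₂ ≤ sstab L M K :=
    ((Subgroup.normal_subgroupOf_iff_le_normalizer hle).1 hnormal).trans
      (hK.normalizer_le_sstab h)
  IsSupport.unique h ⟨hK.finite, hK.aclg_eq, hK.pstab_le.trans hle, hH₂⟩ hK₂

end IsSupport

namespace HypH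

variable {K : Set M}

theorem finite_of_mem_AA (h : HypH L M) (hK : K ∈ AA L M) : K.Finite := by
  obtain ⟨A, hA, rfl⟩ := hK
  exact h.locallyFinite A hA

theorem aclg_eq_of_mem_AA (h : HypH L M) (hK : K ∈ AA L M) : aclg L M K = K := by
  obtain ⟨A, hA, rfl⟩ := hK
  exact aclg_aclg (h.locallyFinite A hA)

theorem isSupport_genStab (h : HypH L M) (hK : K ∈ AA L M) (Lsub : Subgroup (Equiv.Perm K)) :
    IsSupport (genStab L M K Lsub) K :=
  ⟨h.finite_of_mem_AA hK, h.aclg_eq_of_mem_AA hK, pstab_le_genStab K Lsub,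
    genStab_le_sstab K Lsub⟩

theorem le_range_restrict (h : HypH L M) (hK : K ∈ AA L M) {Lsub : Subgroup (Equiv.Perm K)}
    (hiso : ∀ p ∈ Lsub, IsPartialIso L M K K (p : K ≃ K)) : Lsub ≤ (restrict L M K).range := by
  intro p hp
  have hKfin := h.finite_of_mem_AA hK
  have hKcl := h.aclg_eq_of_mem_AA hK
  obtain ⟨g, hgp⟩ := h.extendsIso K K hKfin hKfin hKcl hKcl p (hiso p hp)
  exact mem_range_restrict_of_agree hgp

end HypH

end

/-- Under Hypothesis (H), for `H₁, H₂ ∈ GS(M)`: `H₁` is a normal subgroup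
of finite index of `H₂` iff they are generalized stabilizers `G_(K,L₁)`, `G_(K,L₂)` over the
same `K ∈ A(M)` with `L₁ ⊴ L₂ ≤ Aut(K)`. -/
theorem stmt_10 (L : FirstOrder.Language) (M : Type*) [L.Structure M] (h : HypH L M)
    (H₁ H₂ : Subgroup (M ≃[L] M)) (h₁ : H₁ ∈ GS L M) (h₂ : H₂ ∈ GS L M) :
    (H₁ ≤ H₂ ∧ (H₁.subgroupOf H₂).Normal ∧ H₁.relIndex H₂ ≠ 0) ↔
    (∃ K ∈ AA L M, ∃ L₁ L₂ : Subgroup (Equiv.Perm K),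
      (∀ p ∈ L₂, IsPartialIso L M K K (p : K ≃ K)) ∧ L₁ ≤ L₂ ∧
      (L₁.subgroupOf L₂).Normal ∧
      H₁ = genStab L M K L₁ ∧ H₂ = genStab L M K L₂) := by
  constructor
  · rintro ⟨hle, hnormal, -⟩
    obtain ⟨K₁, hK₁, L₁, hL₁, rfl⟩ := h₁
    obtain ⟨K, hK, L₂, hL₂, rfl⟩ := h₂
    obtain rfl : K₁ = K :=
      (h.isSupport_genStab hK₁ L₁).eq_of_normal h (h.isSupport_genStab hK L₂) hle hnormal
    have hL : L₁ ≤ L₂ := (genStab_le_genStab_iff (h.le_range_restrict hK hL₁)).1 hle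
    exact ⟨K₁, hK, L₁, L₂, hL₂, hL,
      (normal_genStab_iff hL (h.le_range_restrict hK hL₂)).1 hnormal, rfl, rfl⟩
  · rintro ⟨K, hK, L₁, L₂, hL₂, hL, hnormal, rfl, rfl⟩
    have hL₂r := h.le_range_restrict hK hL₂
    exact ⟨(genStab_le_genStab_iff (hL.trans hL₂r)).2 hL, (normal_genStab_iff hL hL₂r).2 hnormal,
      relIndex_ne_zero_of_pstab_le (h.finite_of_mem_AA hK) (pstab_le_genStab K L₁)
        (genStab_le_sstab K L₂)⟩

end Paper
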